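/- arXiv:2301.02507 — 6 statements merged into one kernel-verified Lean document; each statement's English description precedes it below -/
import Mathlib

section
/- A connected graph G with at least one edge satisfies dem(G) = 1 if and only if G is a tree. -/
open SimpleGraph

variable {V : Type*}

/-- Edge `e` is monitored by vertex `x` in `G`: some distance from `x` changes
when `e` is removed. -/
def monitors (G : SimpleGraph V) (x : V) (e : Sym2 V) : Prop :=
  ∃ y : V, G.edist x y ≠ (G.deleteEdges {e}).edist x y

/-- `M` is a distance-edge-monitoring set of `G`. -/
def IsDEMSet (G : SimpleGraph V) (M : Set V) : Prop :=
  ∀ e ∈ G.edgeSet, ∃ x ∈ M, monitors G x e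

/-- The distance-edge-monitoring number of `G`. -/
noncomputable def dem (G : SimpleGraph V) : ℕ :=
  sInf {n | ∃ M : Set V, M.ncard = n ∧ IsDEMSet G M}

/-! A vertex `x` monitors every bridge: deleting it cuts `x` off from one of its endpoints. So in
a tree every single vertex is a DEM set.

Conversely, on a cycle pick a vertex `v` farthest from `x`, and let `w₁, w₂` be its neighbours on
the cycle with `d(x, w₂) ≤ d(x, w₁) ≤ d(x, v)`. Either `d(x, w₁) = d(x, v)`, or both `w₁` and `w₂`
are one step closer to `x` than `v`. In both cases deleting the edge `w₁v` keeps the distances from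
`x` to `w₁` and to `v`. Then, by induction along shortest paths, it keeps every distance from `x`,
so `x` does not monitor `w₁v`. -/

open Walk

namespace SimpleGraph

variable {G : SimpleGraph V} {x u v w y : V}

lemma Walk.dist_lt_of_mem_support {p : G.Walk x y} (hp : p.length = G.dist x y)
    (hv : v ∈ p.support) (hvy : v ≠ y) : G.dist x v < G.dist x y := by
  classical
  exact hp ▸ (dist_le _).trans_lt (length_takeUntil_lt_length hv hvy)

lemma Reachable.exists_adj_dist_add_one_eq (h : G.Reachable x y) (hne : x ≠ y) :
    ∃ z, G.Adj z y ∧ G.dist x z + 1 = G.dist x y := by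
  obtain ⟨p, hp⟩ := h.exists_walk_length_eq_dist
  have hnil : ¬ p.Nil := fun hn => hne hn.eq
  refine ⟨p.penultimate, p.adj_penultimate hnil, le_antisymm ?_ ?_⟩
  · have := dist_le p.dropLast
    have := length_dropLast_add_one hnil
    omega
  · simpa [dist_eq_one_iff_adj.2 (p.adj_penultimate hnil)] using
      (p.adj_penultimate hnil).reachable.dist_triangle_right x

lemma edist_deleteEdges_le_length {e : Sym2 V} (p : G.Walk x y) (hp : e ∉ p.edges) :
    (G.deleteEdges {e}).edist x y ≤ p.length := by
  simpa using edist_le (p.toDeleteEdge e hp)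

end SimpleGraph

variable {G : SimpleGraph V} {x u v w : V}

lemma edist_deleteEdges_le_of_dist_le (hr : G.Reachable x w) (huv : u ≠ v)
    (hu : G.dist x w ≤ G.dist x u) (hv : G.dist x w ≤ G.dist x v) :
    (G.deleteEdges {s(u, v)}).edist x w ≤ G.dist x w := by
  obtain ⟨p, hp⟩ := hr.exists_walk_length_eq_dist
  suffices s(u, v) ∉ p.edges from hp ▸ edist_deleteEdges_le_length p this
  intro he
  have hu' := p.fst_mem_support_of_mem_edges he
  have hv' := p.snd_mem_support_of_mem_edges he
  rcases eq_or_ne u w with rfl | huw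
  · exact (p.dist_lt_of_mem_support hp hv' huv.symm).not_ge hv
  · exact (p.dist_lt_of_mem_support hp hu' huw).not_ge hu

lemma not_monitors_of_edist_deleteEdges_le (hG : G.Connected)
    (hu : (G.deleteEdges {s(u, v)}).edist x u ≤ G.dist x u)
    (hv : (G.deleteEdges {s(u, v)}).edist x v ≤ G.dist x v) :
    ¬ monitors G x s(u, v) := by
  set G' := G.deleteEdges {s(u, v)}
  suffices h : ∀ n y, G.dist x y = n → G'.edist x y ≤ n by
    rintro ⟨y, hy⟩
    refine hy (le_antisymm (edist_anti (G.deleteEdges_le _)) ?_)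
    rw [← (hG x y).coe_dist_eq_edist]
    exact h _ y rfl
  intro n
  induction n with
  | zero =>
    intro y hy
    rw [(hG x y).dist_eq_zero_iff.1 hy, edist_self]
    rfl
  | succ n ih =>
    intro y hy
    rcases eq_or_ne y u with rfl | hyu
    · exact hy ▸ hu
    rcases eq_or_ne y v with rfl | hyv
    · exact hy ▸ hv
    obtain ⟨z, hzy, hz⟩ := (hG x y).exists_adj_dist_add_one_eq (by rintro rfl; simp at hy)
    have hzy' : G'.Adj z y := by
      refine deleteEdges_adj.2 ⟨hzy, fun h => ?_⟩
      rcases Sym2.eq_iff.1 (Set.mem_singleton_iff.1 h) with ⟨-, h⟩ | ⟨-, h⟩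
      exacts [hyv h, hyu h]
    calc G'.edist x y ≤ G'.edist x z + G'.edist z y := SimpleGraph.edist_triangle
      _ ≤ n + 1 := add_le_add (ih z (by omega)) (edist_eq_one_iff_adj.2 hzy').le
      _ = ↑(n + 1) := by push_cast; rfl

lemma not_monitors_of_adj_of_adj (hG : G.Connected) {w₁ w₂ : V} (h₁ : G.Adj w₁ v)
    (h₂ : G.Adj w₂ v) (hne : w₁ ≠ w₂) (h₂₁ : G.dist x w₂ ≤ G.dist x w₁)
    (h₁v : G.dist x w₁ ≤ G.dist x v) : ¬ monitors G x s(w₁, v) := by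
  refine not_monitors_of_edist_deleteEdges_le hG
    (edist_deleteEdges_le_of_dist_le (hG x w₁) h₁.ne le_rfl h₁v) ?_
  rcases h₁v.eq_or_lt with heq | hlt
  · exact edist_deleteEdges_le_of_dist_le (hG x v) h₁.ne heq.ge le_rfl
  have hv₂ : G.dist x v ≤ G.dist x w₂ + 1 := by
    simpa [dist_eq_one_iff_adj.2 h₂] using h₂.reachable.dist_triangle_right x
  have hw₂v : (G.deleteEdges {s(w₁, v)}).Adj w₂ v :=
    deleteEdges_adj.2 ⟨h₂, fun h => hne (Sym2.congr_left.1 (Set.mem_singleton_iff.1 h)).symm⟩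
  calc (G.deleteEdges {s(w₁, v)}).edist x v
      ≤ (G.deleteEdges {s(w₁, v)}).edist x w₂ + (G.deleteEdges {s(w₁, v)}).edist w₂ v :=
        SimpleGraph.edist_triangle
    _ ≤ G.dist x w₂ + 1 :=
        add_le_add (edist_deleteEdges_le_of_dist_le (hG x w₂) h₁.ne h₂₁ (by omega))
          (edist_eq_one_iff_adj.2 hw₂v).le
    _ ≤ G.dist x v := by exact_mod_cast (by omega : G.dist x w₂ + 1 ≤ G.dist x v)

lemma SimpleGraph.Walk.IsCycle.exists_not_monitors (hG : G.Connected) {a : V} {c : G.Walk a a}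
    (hc : c.IsCycle) (x : V) : ∃ e ∈ c.edges, ¬ monitors G x e := by
  classical
  obtain ⟨v, hv, hmax⟩ := c.support.toFinset.exists_max_image (G.dist x) ⟨a, by simp⟩
  rw [List.mem_toFinset] at hv
  set c' := c.rotate v hv
  have hnil : ¬ c'.Nil := (hc.rotate hv).not_nil
  have hedges {e : Sym2 V} (he : e ∈ c'.edges) : e ∈ c.edges :=
    (c.rotate_edges v hv).perm.mem_iff.1 he
  have hdist (i : ℕ) : G.dist x (c'.getVert i) ≤ G.dist x v :=
    hmax _ (List.mem_toFinset.2 ((c.mem_support_rotate_iff v hv).1 (c'.getVert_mem_support i)))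
  have hne : c'.snd ≠ c'.penultimate := (hc.rotate hv).snd_ne_penultimate
  rcases le_total (G.dist x c'.snd) (G.dist x c'.penultimate) with h | h
  · exact ⟨_, hedges (mk_penultimate_end_mem_edges hnil), not_monitors_of_adj_of_adj hG
      (adj_penultimate hnil) (adj_snd hnil).symm hne.symm h (hdist _)⟩
  · refine ⟨_, hedges (mk_start_snd_mem_edges hnil), ?_⟩
    rw [Sym2.eq_swap]
    exact not_monitors_of_adj_of_adj hG (adj_snd hnil).symm (adj_penultimate hnil) hne h
      (hdist _)

lemma monitors_of_isBridge (hG : G.Connected) {e : Sym2 V} (hb : G.IsBridge e) (x : V) :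
    monitors G x e := by
  induction e using Sym2.ind with | _ u v => ?_
  have hb : ¬ (G.deleteEdges {s(u, v)}).Reachable u v := isBridge_iff.1 hb
  by_cases hu : (G.deleteEdges {s(u, v)}).Reachable x u
  · refine ⟨v, ?_⟩
    rw [edist_eq_top_of_not_reachable fun hv => hb (hu.symm.trans hv)]
    exact edist_ne_top_iff_reachable.2 (hG x v)
  · refine ⟨u, ?_⟩
    rw [edist_eq_top_of_not_reachable hu]
    exact edist_ne_top_iff_reachable.2 (hG x u)

lemma isDEMSet_singleton_iff_isAcyclic (hG : G.Connected) :
    IsDEMSet G {x} ↔ G.IsAcyclic := by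
  simp only [IsDEMSet, Set.mem_singleton_iff, exists_eq_left]
  refine ⟨fun h a c hc => ?_, fun h e he => monitors_of_isBridge hG
    (isAcyclic_iff_forall_isBridge.1 h he) x⟩
  obtain ⟨e, he, hnot⟩ := hc.exists_not_monitors hG x
  exact hnot (h e (c.edges_subset_edgeSet he))

lemma dem_eq_one_iff [Finite V] (he : G.edgeSet.Nonempty) :
    dem G = 1 ↔ ∃ x, IsDEMSet G {x} := by
  have hempty : ¬ IsDEMSet G ∅ := fun h => by
    obtain ⟨x, hx, -⟩ := h _ he.some_mem
    exact hx
  set S := {n | ∃ M : Set V, M.ncard = n ∧ IsDEMSet G M}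
  change sInf S = 1 ↔ _
  constructor
  · intro h
    have hne : S.Nonempty := Set.nonempty_iff_ne_empty.2 fun hs => by simp [hs] at h
    obtain ⟨M, hM, hdem⟩ : 1 ∈ S := h ▸ Nat.sInf_mem hne
    obtain ⟨x, rfl⟩ := Set.ncard_eq_one.1 hM
    exact ⟨x, hdem⟩
  · rintro ⟨x, hx⟩
    have hone : 1 ∈ S := ⟨{x}, Set.ncard_singleton x, hx⟩
    refine le_antisymm (Nat.sInf_le hone) (Nat.one_le_iff_ne_zero.2 fun h => ?_)
    rcases Nat.sInf_eq_zero.1 h with ⟨M, hM, hdem⟩ | h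
    · exact hempty ((Set.ncard_eq_zero M.toFinite).1 hM ▸ hdem)
    · exact h.subset hone

theorem stmt2 [Fintype V] (G : SimpleGraph V) (hG : G.Connected)
    (he : G.edgeSet.Nonempty) : dem G = 1 ↔ G.IsTree := by
  rw [dem_eq_one_iff he, isTree_iff, and_iff_right hG]
  obtain ⟨x⟩ := hG.nonempty
  exact ⟨fun ⟨_, h⟩ => (isDEMSet_singleton_iff_isAcyclic hG).1 h,
    fun h => ⟨x, (isDEMSet_singleton_iff_isAcyclic hG).2 h⟩⟩
end

section
/- A connected graph G of order n satisfies dem(G) = n-1 if and only if G is the complete graph K_n. -/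
/-!
A vertex monitors every edge incident to it, so the complement of an independent set is
always a distance-edge-monitoring set; a non-edge `uv` therefore gives `dem G ≤ n - 2`.
In `K_n` all distances are `0` or `1`, and deleting the edge `ab` keeps every other edge,
so no vertex outside `{a, b}` monitors `ab`: a monitoring set misses at most one vertex.
-/

open SimpleGraph

variable {V : Type*}

namespace SimpleGraph

lemma monitors_of_adj {G : SimpleGraph V} {x y : V} (h : G.Adj x y) :
    monitors G x s(x, y) := by
  refine ⟨y, ?_⟩
  rw [edist_eq_one_iff_adj.mpr h, ne_comm, Ne, edist_eq_one_iff_adj]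
  simp

lemma mem_of_monitors_top {x : V} {e : Sym2 V} (h : monitors ⊤ x e) : x ∈ e := by
  by_contra hx
  obtain ⟨y, hy⟩ := h
  rcases eq_or_ne x y with rfl | hxy
  · simp at hy
  · have hdel : ((⊤ : SimpleGraph V).deleteEdges {e}).Adj x y := by
      simp only [deleteEdges_adj, top_adj, Set.mem_singleton_iff]
      exact ⟨hxy, fun he => hx (he ▸ Sym2.mem_mk_left x y)⟩
    exact hy <| by
      rw [edist_eq_one_iff_adj.mpr hdel, edist_eq_one_iff_adj.mpr hxy]

lemma isDEMSet_of_isIndepSet_compl {G : SimpleGraph V} {M : Set V} (h : G.IsIndepSet Mᶜ) :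
    IsDEMSet G M := by
  intro e he
  induction e with
  | h a b =>
    rw [mem_edgeSet] at he
    by_cases ha : a ∈ M
    · exact ⟨a, ha, monitors_of_adj he⟩
    by_cases hb : b ∈ M
    · exact ⟨b, hb, Sym2.eq_swap ▸ monitors_of_adj he.symm⟩
    exact absurd he (h ha hb he.ne)

lemma isDEMSet_top_iff {M : Set V} : IsDEMSet ⊤ M ↔ Mᶜ.Subsingleton := by
  refine ⟨fun hM a ha b hb => ?_, fun h => isDEMSet_of_isIndepSet_compl (h.pairwise _)⟩
  by_contra hab
  obtain ⟨x, hxM, hx⟩ := hM s(a, b) hab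
  rcases Sym2.mem_iff.mp (mem_of_monitors_top hx) with rfl | rfl
  exacts [ha hxM, hb hxM]

lemma dem_le_ncard {G : SimpleGraph V} {M : Set V} (hM : IsDEMSet G M) : dem G ≤ M.ncard :=
  Nat.sInf_le ⟨M, rfl, hM⟩

lemma exists_isDEMSet_ncard_eq_dem (G : SimpleGraph V) :
    ∃ M : Set V, M.ncard = dem G ∧ IsDEMSet G M := by
  have hne : {n | ∃ M : Set V, M.ncard = n ∧ IsDEMSet G M}.Nonempty :=
    ⟨_, Set.univ, rfl, isDEMSet_of_isIndepSet_compl (by simp)⟩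
  exact Nat.sInf_mem hne

lemma dem_le_card_sub_two [Fintype V] {G : SimpleGraph V} {u v : V} (huv : u ≠ v)
    (hnadj : ¬G.Adj u v) : dem G ≤ Fintype.card V - 2 := by
  have hindep : G.IsIndepSet ({u, v} : Set V)ᶜᶜ := by
    rw [compl_compl]
    exact Set.pairwise_pair.mpr fun _ => ⟨hnadj, fun h => hnadj h.symm⟩
  have hcard := Set.ncard_add_ncard_compl ({u, v} : Set V)
  rw [Set.ncard_pair huv, Nat.card_eq_fintype_card] at hcard
  have := dem_le_ncard (isDEMSet_of_isIndepSet_compl hindep)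
  omega

lemma dem_top [Fintype V] : dem (⊤ : SimpleGraph V) = Fintype.card V - 1 := by
  apply le_antisymm
  · rcases isEmpty_or_nonempty V with _ | ⟨⟨v⟩⟩
    · simpa using
        dem_le_ncard (isDEMSet_top_iff.mpr (Set.subsingleton_of_subsingleton (s := ∅ᶜ)))
    · have hcard := Set.ncard_add_ncard_compl ({v} : Set V)
      rw [Set.ncard_singleton, Nat.card_eq_fintype_card] at hcard
      have := dem_le_ncard (isDEMSet_top_iff.mpr (by simp : ({v}ᶜ : Set V)ᶜ.Subsingleton))
      omega
  · obtain ⟨M, hcard, hM⟩ := exists_isDEMSet_ncard_eq_dem (⊤ : SimpleGraph V)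
    have hcompl : Mᶜ.ncard ≤ 1 :=
      Set.ncard_le_one_iff_subsingleton.mpr (isDEMSet_top_iff.mp hM)
    have := Set.ncard_add_ncard_compl M
    rw [Nat.card_eq_fintype_card] at this
    omega

end SimpleGraph

theorem stmt3_general [Fintype V] (G : SimpleGraph V) :
    dem G = Fintype.card V - 1 ↔ G = ⊤ := by
  refine ⟨fun hdem => ?_, fun hG => hG ▸ dem_top⟩
  by_contra hne
  obtain ⟨u, v, huv, hnadj⟩ := ne_top_iff_exists_not_adj.mp hne
  have htwo : 1 < Fintype.card V := Fintype.one_lt_card_iff.mpr ⟨u, v, huv⟩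
  have := dem_le_card_sub_two huv hnadj
  omega

theorem stmt3 [Fintype V] (G : SimpleGraph V) (hG : G.Connected) :
    dem G = Fintype.card V - 1 ↔ G = ⊤ :=
  stmt3_general G
end

section
/- For every pair of integers r, n with 1 ≤ r ≤ n-1, there exists a connected graph G of order n with dem(G) = r. -/
/-!
Take the kite: a clique on `0, …, r` with the path `r, r + 1, …, n - 1` attached at `r`.
The set `{1, …, r}` monitors every edge: each clique edge has an endpoint in it, an endpoint
monitors its own edge, and a bridge is monitored by every vertex.

Conversely, a vertex equidistant from both ends of an edge never monitors it, as no shortest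
path from it can use that edge. Two clique vertices `u, v < r` are twins, hence equidistant from
every other vertex, so a monitoring set contains all but at most one vertex `w` of
`{0, …, r - 1}`; and then the edge `w r`, whose ends are both adjacent to every other vertex
below `r`, forces a monitor outside `{0, …, r - 1}`.
-/

open SimpleGraph

variable {V : Type*}

namespace SimpleGraph

variable {W : Type*} {G : SimpleGraph V} {G' : SimpleGraph W} {x y u v : V}

lemma Hom.edist_le (f : G →g G') (a b : V) : G'.edist (f a) (f b) ≤ G.edist a b := by
  by_cases h : G.Reachable a b
  · obtain ⟨p, hp⟩ := h.exists_walk_length_eq_edist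
    rw [← hp, ← p.length_map f]
    exact SimpleGraph.edist_le _
  · simp [edist_eq_top_of_not_reachable h]

lemma Iso.edist_eq (σ : G ≃g G') (a b : V) : G'.edist (σ a) (σ b) = G.edist a b :=
  le_antisymm (σ.toHom.edist_le a b) (by simpa using σ.symm.toHom.edist_le (σ a) (σ b))

/-- Swapping two twins is an automorphism fixing every other vertex. -/
lemma edist_eq_of_twins (htwin : ∀ a, a ≠ u → a ≠ v → (G.Adj u a ↔ G.Adj v a))
    (hxu : x ≠ u) (hxv : x ≠ v) : G.edist x u = G.edist x v := by
  classical
  let σ : G ≃g G :=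
    { toEquiv := Equiv.swap u v
      map_rel_iff' := by
        intro a b
        simp only [Equiv.swap_apply_def]
        split_ifs <;> subst_vars <;> grind [adj_comm, SimpleGraph.irrefl] }
  simpa [σ, Equiv.swap_apply_of_ne_of_ne hxu hxv] using (σ.edist_eq x u).symm

lemma Walk.dist_eq_succ_of_isSubwalk {p : G.Walk x y} (hp : p.length = G.dist x y)
    (h : G.Adj u v) (hs : h.toWalk.IsSubwalk p) : G.dist x v = G.dist x u + 1 := by
  obtain ⟨ru, rv, rfl⟩ := hs
  have hu := length_eq_dist_of_subwalk hp (p₂ := ru)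
    ⟨nil, h.toWalk.append rv, by rw [Walk.nil_append, Walk.append_assoc]⟩
  have hv := length_eq_dist_of_subwalk hp (p₂ := ru.append h.toWalk) ⟨nil, rv, by simp⟩
  simp only [Walk.length_append, Walk.length_cons, Walk.length_nil, zero_add] at hv
  omega

lemma Walk.mk_notMem_edges_of_edist_eq {p : G.Walk x y} (hp : p.length = G.dist x y)
    (huv : G.edist x u = G.edist x v) : s(u, v) ∉ p.edges := by
  classical
  intro hmem
  have hadj := p.adj_of_mem_edges hmem
  have hxu : G.Reachable x u := ⟨p.takeUntil u (p.fst_mem_support_of_mem_edges hmem)⟩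
  have hxv : G.Reachable x v := hxu.trans hadj.reachable
  rw [← hxu.coe_dist_eq_edist, ← hxv.coe_dist_eq_edist, Nat.cast_inj] at huv
  rcases (isSubwalk_toWalk_iff_mem_edges hadj).mpr hmem with hs | hs
  · have := dist_eq_succ_of_isSubwalk hp hadj hs
    omega
  · have := dist_eq_succ_of_isSubwalk hp hadj.symm hs
    omega

end SimpleGraph

section Monitoring

variable {G : SimpleGraph V} {x a b u v : V} {e : Sym2 V}

lemma monitors_of_adj (h : G.Adj a b) : monitors G a s(a, b) := by
  refine ⟨b, ?_⟩
  rw [edist_eq_one_iff_adj.mpr h, ne_comm, Ne, edist_eq_one_iff_adj, deleteEdges_adj]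
  simp

lemma monitors_of_not_reachable_deleteEdges (hG : G.Connected)
    (hab : ¬ (G.deleteEdges {e}).Reachable a b) (x : V) : monitors G x e := by
  have : ¬ (G.deleteEdges {e}).Reachable x a ∨ ¬ (G.deleteEdges {e}).Reachable x b := by
    by_contra! h
    exact hab (h.1.symm.trans h.2)
  obtain ⟨y, hy⟩ : ∃ y, ¬ (G.deleteEdges {e}).Reachable x y := by tauto
  exact ⟨y, by simpa [edist_eq_top_of_not_reachable hy, edist_ne_top_iff_reachable]
    using hG.preconnected x y⟩

/-- No shortest path from `x` can run along an edge whose ends are equidistant from `x`. -/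
lemma not_monitors_of_edist_eq (huv : G.edist x u = G.edist x v) : ¬ monitors G x s(u, v) := by
  rintro ⟨y, hy⟩
  refine hy (le_antisymm (edist_anti (deleteEdges_le _)) ?_)
  by_cases hxy : G.Reachable x y
  · obtain ⟨p, hp⟩ := hxy.exists_walk_length_eq_dist
    calc (G.deleteEdges {s(u, v)}).edist x y
        ≤ (p.toDeleteEdge _ (p.mk_notMem_edges_of_edist_eq hp huv)).length := edist_le _
      _ = G.edist x y := by simp [hp, hxy.coe_dist_eq_edist]
  · simp [edist_eq_top_of_not_reachable hxy]

lemma dem_eq_of_isDEMSet {M : Set V} {k : ℕ} (hM : IsDEMSet G M) (hk : M.ncard = k)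
    (hmin : ∀ M', IsDEMSet G M' → k ≤ M'.ncard) : dem G = k :=
  le_antisymm (Nat.sInf_le ⟨M, hk, hM⟩)
    (le_csInf ⟨k, M, hk, hM⟩ fun _ ⟨M', hM', hdem⟩ ↦ hM' ▸ hmin M' hdem)

end Monitoring

/-- `M` misses at most one point of `A`, and that point is paid for by an element of `M \ A`. -/
lemma Set.ncard_le_ncard_of_forall_ne {α : Type*} {A M : Set α} (hM : M.Finite)
    (hpair : ∀ u ∈ A, ∀ v ∈ A, u ≠ v → u ∈ M ∨ v ∈ M)
    (hout : ∀ w ∈ A, w ∉ M → ∃ x ∈ M, x ∉ A) : A.ncard ≤ M.ncard := by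
  by_cases hAM : A ⊆ M
  · exact Set.ncard_le_ncard hAM hM
  obtain ⟨w, hwA, hwM⟩ := Set.not_subset.mp hAM
  obtain ⟨x, hxM, hxA⟩ := hout w hwA hwM
  have hsub : insert x (A \ {w}) ⊆ M := by
    refine Set.insert_subset hxM fun z ⟨hzA, hzw⟩ ↦ ?_
    exact (hpair z hzA w hwA hzw).resolve_right hwM
  have hAfin : A.Finite :=
    ((hM.subset hsub).subset (Set.subset_insert _ _)).of_sdiff (Set.finite_singleton w)
  calc A.ncard = (insert x (A \ {w})).ncard := by
        rw [Set.ncard_insert_of_notMem (fun h ↦ hxA h.1) hAfin.sdiff,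
          Set.ncard_sdiff_singleton_add_one hwA hAfin]
    _ ≤ M.ncard := Set.ncard_le_ncard hsub hM

namespace SimpleGraph

/-- The kite `K(r, n)`: the vertices `0, …, r` span a clique `K_{r+1}` and
`r, r + 1, …, n - 1` form a path. -/
def kite (n r : ℕ) : SimpleGraph (Fin n) :=
  fromRel fun a b ↦ (a.val ≤ r ∧ b.val ≤ r) ∨ a.val + 1 = b.val

variable {n r : ℕ}

lemma kite_adj {a b : Fin n} : (kite n r).Adj a b ↔
    a ≠ b ∧ ((a.val ≤ r ∧ b.val ≤ r) ∨ a.val + 1 = b.val ∨ b.val + 1 = a.val) := by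
  simp only [kite, fromRel_adj]
  tauto

lemma pathGraph_le_kite : pathGraph n ≤ kite n r := fun a b h ↦ by
  rw [pathGraph_adj] at h
  exact kite_adj.mpr ⟨by rintro rfl; omega, by omega⟩

lemma kite_connected (hn : 0 < n) : (kite n r).Connected :=
  have : Nonempty (Fin n) := ⟨⟨0, hn⟩⟩
  ⟨(pathGraph_preconnected n).mono pathGraph_le_kite⟩

lemma kite_adj_iff_of_lt {u a : Fin n} (hu : u.val < r) (hau : a ≠ u) :
    (kite n r).Adj u a ↔ a.val ≤ r := by
  rw [kite_adj, Fin.ne_iff_vne] at *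
  omega

lemma kite_not_reachable_deleteEdges {a b : Fin n} (ha : r ≤ a.val) (hab : a.val + 1 = b.val) :
    ¬ ((kite n r).deleteEdges {s(a, b)}).Reachable a b := by
  rintro ⟨p⟩
  obtain ⟨d, -, hd, hd'⟩ := p.exists_boundary_dart {c | c.val ≤ a.val}
    (le_refl a.val) (show ¬ b.val ≤ a.val by omega)
  have hadj := d.adj
  simp only [Set.mem_ofPred_eq, not_le] at hd hd'
  rw [deleteEdges_adj, kite_adj] at hadj
  refine hadj.2 ?_
  have : d.fst = a ∧ d.snd = b := by omega
  simp [this]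

lemma kite_isDEMSet (hr : 1 ≤ r) (hrn : r < n) :
    IsDEMSet (kite n r) (Set.Icc ⟨1, by omega⟩ ⟨r, hrn⟩) := by
  have hmem : ∀ c : Fin n, c ∈ Set.Icc ⟨1, by omega⟩ ⟨r, hrn⟩ ↔ 1 ≤ c.val ∧ c.val ≤ r :=
    fun c ↦ Iff.rfl
  have hbridge {a b : Fin n} (ha : r ≤ a.val) (hab : a.val + 1 = b.val) :
      monitors (kite n r) ⟨r, hrn⟩ s(a, b) :=
    monitors_of_not_reachable_deleteEdges (kite_connected (by omega))
      (kite_not_reachable_deleteEdges ha hab) _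
  intro e he
  induction e using Sym2.ind with | _ a b =>
  rw [mem_edgeSet] at he
  obtain ⟨hne, hab⟩ := kite_adj.mp he
  rw [Fin.ne_iff_vne] at hne
  by_cases hclique : a.val ≤ r ∧ b.val ≤ r
  · by_cases ha : a.val = 0
    · exact ⟨b, (hmem b).mpr (by omega), Sym2.eq_swap ▸ monitors_of_adj he.symm⟩
    · exact ⟨a, (hmem a).mpr (by omega), monitors_of_adj he⟩
  · refine ⟨⟨r, hrn⟩, (hmem _).mpr ⟨hr, le_rfl⟩, ?_⟩
    rcases hab with hab | hab | hab
    · exact absurd hab hclique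
    · exact hbridge (by omega) hab
    · exact Sym2.eq_swap ▸ hbridge (by omega) hab

lemma le_ncard_of_isDEMSet_kite (hrn : r < n) {M : Set (Fin n)}
    (hM : IsDEMSet (kite n r) M) : r ≤ M.ncard := by
  set R : Fin n := ⟨r, hrn⟩
  have hA : (Set.Iio R).ncard = r := by
    rw [Set.ncard_eq_toFinset_card', Set.toFinset_Iio, Fin.card_Iio]
  rw [← hA]
  refine Set.ncard_le_ncard_of_forall_ne M.toFinite ?_ ?_
  · intro u (hu : u.val < r) v (hv : v.val < r) huv
    by_contra! huvM
    obtain ⟨x, hxM, hx⟩ :=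
      hM s(u, v) ((kite n r).mem_edgeSet.mpr (kite_adj.mpr ⟨huv, by omega⟩))
    refine not_monitors_of_edist_eq (edist_eq_of_twins (fun a hau hav ↦ ?_)
      (ne_of_mem_of_not_mem hxM huvM.1) (ne_of_mem_of_not_mem hxM huvM.2)) hx
    rw [kite_adj_iff_of_lt hu hau, kite_adj_iff_of_lt hv hav]
  · intro w (hw : w.val < r) hwM
    have hwR : w ≠ R := Fin.ne_of_lt hw
    obtain ⟨x, hxM, hx⟩ :=
      hM s(w, R) ((kite n r).mem_edgeSet.mpr (kite_adj.mpr ⟨hwR, Or.inl ⟨hw.le, le_rfl⟩⟩))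
    refine ⟨x, hxM, fun (hxA : x.val < r) ↦ not_monitors_of_edist_eq ?_ hx⟩
    have hxw : w ≠ x := (ne_of_mem_of_not_mem hxM hwM).symm
    rw [edist_eq_one_iff_adj.mpr ((kite_adj_iff_of_lt hxA hxw).mpr hw.le),
      edist_eq_one_iff_adj.mpr ((kite_adj_iff_of_lt hxA (Fin.ne_of_gt hxA)).mpr le_rfl)]

end SimpleGraph

theorem stmt6 (r n : ℕ) (hr : 1 ≤ r) (hrn : r ≤ n - 1) :
    ∃ G : SimpleGraph (Fin n), G.Connected ∧ dem G = r := by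
  have hrn' : r < n := by omega
  refine ⟨kite n r, kite_connected (by omega), dem_eq_of_isDEMSet (kite_isDEMSet hr hrn') ?_
    fun M hM ↦ le_ncard_of_isDEMSet_kite hrn' hM⟩
  rw [Set.ncard_eq_toFinset_card', Set.toFinset_Icc, Fin.card_Icc]
  simp
end

section
/- Let G be a connected graph and uv ∈ E(G). If uv ∉ EM(w) for every w ∈ (N_G(u) ∪ N_G(v)) \ {u,v}, then uv is monitored only by u and v, i.e., uv ∉ EM(x) for every x ∈ V(G) \ {u,v}. -/
/-!
If `x ∉ {u, v}` monitors `uv` through `y`, follow a shortest `x`–`y` walk. Its first edge `xb`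
survives the deletion of `uv`, so if `b` did not monitor `uv` through `y` either, the distance
from `x` to `y` could not grow. Hence the monitoring passes to `b`, one step closer to `y`, until
the walk reaches `u` or `v`; the vertex just before that is a neighbour of `u` or `v` which
monitors `uv`.
-/

open SimpleGraph

variable {V : Type*}

lemma monitors_iff_exists_edist_lt {G : SimpleGraph V} {x : V} {e : Sym2 V} :
    monitors G x e ↔ ∃ y, G.edist x y < (G.deleteEdges {e}).edist x y := by
  refine exists_congr fun y => ⟨fun hne => lt_of_le_of_ne ?_ hne, ne_of_lt⟩
  exact edist_anti (deleteEdges_le _)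

namespace SimpleGraph

variable {G H : SimpleGraph V}

lemma Walk.length_tail_eq_edist_of_length_eq_edist {x b y : V} (hxb : G.Adj x b)
    (q : G.Walk b y) (hp : ((Walk.cons hxb q).length : ℕ∞) = G.edist x y) :
    (q.length : ℕ∞) = G.edist b y := by
  refine le_antisymm ?_ (edist_le q)
  have : (q.length : ℕ∞) + 1 ≤ G.edist b y + 1 := calc
    (q.length : ℕ∞) + 1 = G.edist x y := by simpa using hp
    _ ≤ G.edist x b + G.edist b y := SimpleGraph.edist_triangle
    _ ≤ 1 + G.edist b y := by gcongr; exact edist_le_one_iff_adj_or_eq.mpr (Or.inl hxb)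
    _ = G.edist b y + 1 := add_comm _ _
  exact (ENat.add_le_add_iff_right ENat.one_ne_top).mp this

lemma edist_lt_of_adj_of_edist_eq_add_one {x b y : V} (hxb : H.Adj x b)
    (hgeo : G.edist x y = G.edist b y + 1) (hx : G.edist x y < H.edist x y) :
    G.edist b y < H.edist b y := by
  by_contra! hb
  have : H.edist x y ≤ G.edist x y := calc
    H.edist x y ≤ H.edist x b + H.edist b y := SimpleGraph.edist_triangle
    _ ≤ 1 + G.edist b y := add_le_add (edist_le_one_iff_adj_or_eq.mpr (Or.inl hxb)) hb
    _ = G.edist x y := by rw [hgeo, add_comm]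
  exact this.not_gt hx

lemma exists_mem_neighborSet_edist_lt_deleteEdges {u v x y : V} (p : G.Walk x y)
    (hp : (p.length : ℕ∞) = G.edist x y) (hxu : x ≠ u) (hxv : x ≠ v)
    (hx : G.edist x y < (G.deleteEdges {s(u, v)}).edist x y) :
    ∃ w ∈ G.neighborSet u ∪ G.neighborSet v, w ≠ u ∧ w ≠ v ∧
      G.edist w y < (G.deleteEdges {s(u, v)}).edist w y := by
  induction p with
  | nil => simp at hx
  | @cons x b y hxb q ih =>
    have hq := Walk.length_tail_eq_edist_of_length_eq_edist hxb q hp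
    by_cases hb : b = u ∨ b = v
    · refine ⟨x, ?_, hxu, hxv, hx⟩
      rcases hb with rfl | rfl
      exacts [Or.inl hxb.symm, Or.inr hxb.symm]
    obtain ⟨hbu, hbv⟩ := not_or.mp hb
    refine ih hq hbu hbv (edist_lt_of_adj_of_edist_eq_add_one ?_ ?_ hx)
    · refine (deleteEdges_adj ..).mpr ⟨hxb, ?_⟩
      simp [hxu, hxv]
    · rw [← hp, ← hq]
      simp

end SimpleGraph

theorem stmt8_general (G : SimpleGraph V) (u v : V)
    (h : ∀ w ∈ G.neighborSet u ∪ G.neighborSet v, w ≠ u → w ≠ v →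
      ¬ monitors G w s(u, v)) :
    ∀ x : V, x ≠ u → x ≠ v → ¬ monitors G x s(u, v) := by
  rintro x hxu hxv hx
  obtain ⟨y, hy⟩ := monitors_iff_exists_edist_lt.mp hx
  obtain ⟨p, hp⟩ := exists_walk_of_edist_ne_top hy.ne_top
  obtain ⟨w, hw, hwu, hwv, hwy⟩ := exists_mem_neighborSet_edist_lt_deleteEdges p hp hxu hxv hy
  exact h w hw hwu hwv (monitors_iff_exists_edist_lt.mpr ⟨y, hwy⟩)

theorem stmt8 [Fintype V] (G : SimpleGraph V) (hG : G.Connected) (u v : V)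
    (huv : G.Adj u v)
    (h : ∀ w ∈ G.neighborSet u ∪ G.neighborSet v, w ≠ u → w ≠ v →
      ¬ monitors G w s(u, v)) :
    ∀ x : V, x ≠ u → x ≠ v → ¬ monitors G x s(u, v) :=
  stmt8_general G u v h
end

section
/- For every positive integer k, there exist a connected graph G and a vertex v ∈ V(G) such that dem(G) - dem(G \ v) ≥ k, where G \ v denotes the graph obtained by deleting v and all its incident edges. -/
open SimpleGraph

variable {V : Type*}

/-!
In the kipas `K₁ ∨ P_{2k+2}` the apex is adjacent to every other vertex, so all distances are at
most two and are determined by adjacency. Deleting a path edge changes no adjacency at a vertex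
off that edge, so each path edge is monitored only by its endpoints, and the `k + 1` disjoint path
edges `{2j+1, 2j+2}` force `dem ≥ k + 1`. Deleting the apex leaves a path, which is a tree: every
edge is a bridge, so any single vertex monitors all edges and `dem ≤ 1`.
-/

namespace SimpleGraph

variable {G : SimpleGraph V}

lemma monitors_of_mem {x : V} {e : Sym2 V} (he : e ∈ G.edgeSet) (hx : x ∈ e) :
    monitors G x e := by
  obtain ⟨y, rfl⟩ := Sym2.mem_iff_exists.mp hx
  refine ⟨y, ?_⟩
  rw [edist_eq_one_iff_adj.mpr he, ne_comm, Ne, edist_eq_one_iff_adj]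
  simp

lemma isDEMSet_univ (G : SimpleGraph V) : IsDEMSet G Set.univ :=
  fun _ he ↦ ⟨_, Set.mem_univ _, monitors_of_mem he (Sym2.out_fst_mem _)⟩

lemma monitors_of_isBridge (hG : G.Preconnected) {u w : V} (hb : G.IsBridge s(u, w)) (x : V) :
    monitors G x s(u, w) := by
  have hnot : ¬ ((G.deleteEdges {s(u, w)}).Reachable x u ∧
      (G.deleteEdges {s(u, w)}).Reachable x w) :=
    fun ⟨hu, hw⟩ ↦ isBridge_iff.mp hb (hu.symm.trans hw)
  have key : ∀ y, ¬ (G.deleteEdges {s(u, w)}).Reachable x y → monitors G x s(u, w) :=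
    fun y hy ↦ ⟨y, by
      rw [edist_eq_top_of_not_reachable hy]
      exact edist_ne_top_iff_reachable.mpr (hG x y)⟩
  rw [not_and_or] at hnot
  exact hnot.elim (key u) (key w)

lemma dem_le_one_of_isTree (hG : G.IsTree) : dem G ≤ 1 := by
  obtain ⟨x⟩ := hG.connected.nonempty
  refine Nat.sInf_le ⟨{x}, Set.ncard_singleton x, fun e he ↦ ⟨x, rfl, ?_⟩⟩
  induction e with
  | h u w =>
    exact monitors_of_isBridge hG.connected.preconnected
      (isAcyclic_iff_forall_isBridge.mp hG.isAcyclic he) x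

def IsDominating (G : SimpleGraph V) (a : V) : Prop :=
  ∀ z, z ≠ a → G.Adj a z

lemma IsDominating.edist_eq_two {a x y : V} (ha : G.IsDominating a) (hxy : x ≠ y)
    (hadj : ¬ G.Adj x y) : G.edist x y = 2 := by
  have hxa : x ≠ a := by rintro rfl; exact hadj (ha y hxy.symm)
  have hya : y ≠ a := by rintro rfl; exact hadj (ha x hxy).symm
  exact edist_eq_two_iff.mpr ⟨hxy, hadj, a, (ha x hxa).symm, (ha y hya).symm⟩

/-- Distances in a graph with a dominating vertex are determined by adjacency, and deleting an
edge that avoids `x` and the dominating vertex changes no adjacency at `x`. -/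
lemma IsDominating.not_monitors {a x : V} {e : Sym2 V} (ha : G.IsDominating a) (hae : a ∉ e)
    (hxe : x ∉ e) : ¬ monitors G x e := by
  set G' := G.deleteEdges {e}
  have hadj : ∀ {u v}, u ∉ e → (G'.Adj u v ↔ G.Adj u v) := fun hu ↦ by
    simp only [G', deleteEdges_adj, Set.mem_singleton_iff, and_iff_left_iff_imp]
    rintro - rfl
    exact hu (Sym2.mem_mk_left _ _)
  have ha' : G'.IsDominating a := fun z hz ↦ (hadj hae).mpr (ha z hz)
  rintro ⟨y, hy⟩
  by_cases hxy : x = y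
  · simp [hxy] at hy
  by_cases hA : G.Adj x y
  · rw [edist_eq_one_iff_adj.mpr hA, edist_eq_one_iff_adj.mpr ((hadj hxe).mpr hA)] at hy
    exact hy rfl
  · rw [ha.edist_eq_two hxy hA, ha'.edist_eq_two hxy (by rwa [hadj hxe])] at hy
    exact hy rfl

lemma card_le_dem_of_disjoint_edges [Finite V] {ι : Type*} [Finite ι] (e : ι → Sym2 V)
    (he : ∀ i, e i ∈ G.edgeSet) (hmon : ∀ i x, monitors G x (e i) → x ∈ e i)
    (hdisj : ∀ i j x, x ∈ e i → x ∈ e j → i = j) : Nat.card ι ≤ dem G := by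
  refine le_csInf ⟨_, _, rfl, isDEMSet_univ G⟩ ?_
  rintro _ ⟨M, rfl, hM⟩
  choose f hfM hfe using fun i ↦ hM _ (he i)
  have hinj : Function.Injective fun i ↦ (⟨f i, hfM i⟩ : M) :=
    fun i j hij ↦ hdisj i j (f i) (hmon i _ (hfe i)) <| by
      rw [show f i = f j from congrArg Subtype.val hij]
      exact hmon j _ (hfe j)
  rw [← Nat.card_coe_set_eq]
  exact Nat.card_le_card_of_injective _ hinj

lemma isBridge_of_forall_adj_mem {S : Set V} {u w : V} (hu : u ∈ S) (hw : w ∉ S)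
    (hS : ∀ x y, G.Adj x y → x ∈ S → y ∉ S → s(x, y) = s(u, w)) :
    G.IsBridge s(u, w) := by
  rintro ⟨p⟩
  obtain ⟨d, -, hd₁, hd₂⟩ := p.exists_boundary_dart S hu hw
  have hd := d.adj
  simp only [deleteEdges_adj, Set.mem_singleton_iff] at hd
  exact hd.2 (hS _ _ hd.1 hd₁ hd₂)

lemma isTree_pathGraph (n : ℕ) : (pathGraph (n + 1)).IsTree := by
  refine ⟨pathGraph_connected n, isAcyclic_iff_forall_adj_isBridge.mpr ?_⟩
  have hcut : ∀ {u w : Fin (n + 1)}, u.val + 1 = w.val → (pathGraph (n + 1)).IsBridge s(u, w) :=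
    fun {u w} huw ↦ isBridge_of_forall_adj_mem (Set.mem_Iic.mpr le_rfl)
      (by rw [Set.mem_Iic, Fin.le_def, not_le]; omega) fun x y hxy hx hy ↦ by
        simp only [pathGraph_adj, Set.mem_Iic, Fin.le_def, not_le] at hxy hx hy
        have hx : x = u := Fin.ext (by omega)
        have hy : y = w := Fin.ext (by omega)
        rw [hx, hy]
  intro u w huw
  rcases pathGraph_adj.mp huw with h | h
  · exact hcut h
  · exact Sym2.eq_swap ▸ hcut h

/-- The kipas `K₁ ∨ Pₙ`: the apex `0` joined to every vertex of the path `1, …, n`. -/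
def kipas (n : ℕ) : SimpleGraph (Fin (n + 1)) :=
  fromRel fun x y ↦ x = 0 ∨ x.val + 1 = y.val

lemma kipas_adj {n : ℕ} {x y : Fin (n + 1)} :
    (kipas n).Adj x y ↔
      x ≠ y ∧ (x = 0 ∨ y = 0 ∨ x.val + 1 = y.val ∨ y.val + 1 = x.val) := by
  simp only [kipas, fromRel_adj]
  tauto

lemma isDominating_kipas (n : ℕ) : (kipas n).IsDominating 0 :=
  fun _ hz ↦ kipas_adj.mpr ⟨hz.symm, Or.inl rfl⟩

lemma kipas_connected (n : ℕ) : (kipas n).Connected :=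
  (connected_iff_exists_forall_reachable _).mpr ⟨0, fun z ↦ by
    rcases eq_or_ne z 0 with rfl | hz
    · rfl
    · exact (isDominating_kipas n z hz).reachable⟩

def pathGraphIsoKipasInduce (n : ℕ) : pathGraph n ≃g (kipas n).induce {w | w ≠ 0} where
  toFun i := ⟨i.succ, i.succ_ne_zero⟩
  invFun w := w.1.pred w.2
  left_inv i := Fin.pred_succ i
  right_inv w := Subtype.ext (Fin.succ_pred _ w.2)
  map_rel_iff' {i j} := by
    simp only [Equiv.coe_fn_mk, comap_adj, Function.Embedding.subtype_apply, kipas_adj,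
      pathGraph_adj, ne_eq, Fin.succ_inj, Fin.succ_ne_zero, Fin.val_succ, false_or]
    constructor
    · rintro ⟨-, h⟩
      omega
    · rintro h
      exact ⟨by rintro rfl; omega, by omega⟩

lemma half_le_dem_kipas (n : ℕ) : n / 2 ≤ dem (kipas n) := by
  let e : Fin (n / 2) → Sym2 (Fin (n + 1)) :=
    fun j ↦ s(⟨2 * j + 1, by omega⟩, ⟨2 * j + 2, by omega⟩)
  have hval : ∀ j x, x ∈ e j → x.val = 2 * j + 1 ∨ x.val = 2 * j + 2 := by
    intro j x hx
    rcases Sym2.mem_iff.mp hx with rfl | rfl <;> simp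
  have hedge : ∀ j, e j ∈ (kipas n).edgeSet := fun j ↦
    kipas_adj.mpr ⟨by simp [Fin.ext_iff], by simp⟩
  have hmon : ∀ j x, monitors (kipas n) x (e j) → x ∈ e j := by
    intro j x hx
    by_contra hxe
    refine (isDominating_kipas n).not_monitors (fun h ↦ ?_) hxe hx
    rcases hval j 0 h with h | h <;> simp at h
  have hdisj : ∀ i j x, x ∈ e i → x ∈ e j → i = j := by
    intro i j x hi hj
    rcases hval i x hi with h | h <;> rcases hval j x hj with h' | h' <;> ext <;> omega
  simpa using card_le_dem_of_disjoint_edges e hedge hmon hdisj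

end SimpleGraph

theorem stmt12_general (k : ℕ) :
    ∃ (n : ℕ) (G : SimpleGraph (Fin n)) (v : Fin n), G.Connected ∧
      dem G - dem (SimpleGraph.induce {w | w ≠ v} G) ≥ k := by
  refine ⟨2 * k + 2 + 1, kipas (2 * k + 2), 0, kipas_connected _, ?_⟩
  have hlower := half_le_dem_kipas (2 * k + 2)
  have hupper := dem_le_one_of_isTree ((pathGraphIsoKipasInduce (2 * k + 2)).isTree_iff.mp
    (isTree_pathGraph (2 * k + 1)))
  omega

theorem stmt12 (k : ℕ) (hk : 1 ≤ k) :
    ∃ (n : ℕ) (G : SimpleGraph (Fin n)) (v : Fin n), G.Connected ∧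
      dem G - dem (SimpleGraph.induce {w | w ≠ v} G) ≥ k :=
  stmt12_general k
end

section
/- For the complete bipartite graph K_{n,n} (n ≥ 3) and any edge e, dem(K_{n,n} - e) = n = dem(K_{n,n}). -/
open SimpleGraph

variable {V : Type*}

/-! When `n ≥ 3`, deleting at most two edges from `K_{n,n}` leaves a vertex on each side adjacent
to the whole other side. In such a graph every distance is `0`, `1`, `2` or `3` and is read off
from the sides of the two vertices and whether they are adjacent. Removing an edge `f` changes
no adjacency at a vertex `x ∉ f`, so `x` does not monitor `f`, while an endpoint of an edge always
monitors it. Hence the DEM sets of `K_{n,n}` and of `K_{n,n} - e` are exactly their vertex covers: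
one side is a cover with `n` vertices, and a perfect matching avoiding `e` shows that no cover
is smaller. -/

open Sum

theorem monitors_of_mem {G : SimpleGraph V} {x : V} {e : Sym2 V} (he : e ∈ G.edgeSet)
    (hx : x ∈ e) : monitors G x e := by
  obtain ⟨y, rfl⟩ := Sym2.mem_iff_exists.mp hx
  refine ⟨y, ?_⟩
  rw [edist_eq_one_iff_adj.mpr he, ne_comm, Ne, edist_eq_one_iff_adj]
  simp [deleteEdges_adj]

theorem SimpleGraph.IsVertexCover.isDEMSet {G : SimpleGraph V} {M : Set V}
    (hM : G.IsVertexCover M) : IsDEMSet G M := by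
  intro e he
  induction e using Sym2.ind with
  | _ v w =>
    rcases hM he with hv | hw
    · exact ⟨v, hv, monitors_of_mem he (Sym2.mem_mk_left v w)⟩
    · exact ⟨w, hw, monitors_of_mem he (Sym2.mem_mk_right v w)⟩

theorem dem_eq_of_isLeast {G : SimpleGraph V} {k : ℕ}
    (h : IsLeast {n | ∃ M : Set V, M.ncard = n ∧ IsDEMSet G M} k) : dem G = k :=
  h.csInf_eq

section Bipartite

variable {α β : Type*} {H H' : SimpleGraph (α ⊕ β)}

theorem exists_eq_inl_inr_of_mem_edgeSet {e : Sym2 (α ⊕ β)}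
    (he : e ∈ (completeBipartiteGraph α β).edgeSet) : ∃ a b, e = s(inl a, inr b) := by
  induction e using Sym2.ind with
  | _ u v =>
    rcases u with a | b <;> rcases v with a' | b'
    · simp at he
    · exact ⟨a, b', rfl⟩
    · exact ⟨a', b, Sym2.eq_swap⟩
    · simp at he

theorem isLeft_ne_of_adj (hH : H ≤ completeBipartiteGraph α β) {u v : α ⊕ β} (h : H.Adj u v) :
    u.isLeft ≠ v.isLeft := by
  have := hH h
  cases u <;> cases v <;> simp_all

def HasDominatingVertexOnEachSide (H : SimpleGraph (α ⊕ β)) : Prop :=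
  (∃ a, ∀ b, H.Adj (inl a) (inr b)) ∧ ∃ b, ∀ a, H.Adj (inl a) (inr b)

theorem HasDominatingVertexOnEachSide.mono (hH : H ≤ H') (h : HasDominatingVertexOnEachSide H) :
    HasDominatingVertexOnEachSide H' :=
  ⟨h.1.imp fun _ ha b => hH (ha b), h.2.imp fun _ hb a => hH (hb a)⟩

theorem commonNeighbors_eq_empty_of_isLeft_ne (hH : H ≤ completeBipartiteGraph α β)
    {u v : α ⊕ β} (huv : u.isLeft ≠ v.isLeft) : H.commonNeighbors u v = ∅ := by
  refine Set.eq_empty_of_forall_notMem fun w hw => ?_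
  obtain ⟨huw, hvw⟩ := (H.mem_commonNeighbors).mp hw
  have hu := isLeft_ne_of_adj hH huw
  have hv := isLeft_ne_of_adj hH hvw
  revert huv hu hv
  cases u.isLeft <;> cases v.isLeft <;> cases w.isLeft <;> decide

theorem HasDominatingVertexOnEachSide.commonNeighbors_nonempty
    (h : HasDominatingVertexOnEachSide H) {u v : α ⊕ β} (huv : u.isLeft = v.isLeft) :
    (H.commonNeighbors u v).Nonempty := by
  obtain ⟨⟨a₀, ha₀⟩, ⟨b₀, hb₀⟩⟩ := h
  rcases u with a | b <;> rcases v with a' | b'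
  · exact ⟨inr b₀, (H.mem_commonNeighbors).mpr ⟨hb₀ a, hb₀ a'⟩⟩
  · simp at huv
  · simp at huv
  · exact ⟨inl a₀, (H.mem_commonNeighbors).mpr ⟨(ha₀ b).symm, (ha₀ b').symm⟩⟩

theorem HasDominatingVertexOnEachSide.edist_inl_inr_le_three
    (h : HasDominatingVertexOnEachSide H) (a : α) (b : β) : H.edist (inl a) (inr b) ≤ 3 := by
  obtain ⟨⟨a₀, ha₀⟩, ⟨b₀, hb₀⟩⟩ := h
  simpa using (Walk.cons (hb₀ a) (Walk.cons (ha₀ b₀).symm (ha₀ b).toWalk)).edist_le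

theorem HasDominatingVertexOnEachSide.edist_le_three (h : HasDominatingVertexOnEachSide H)
    {u v : α ⊕ β} (huv : u.isLeft ≠ v.isLeft) : H.edist u v ≤ 3 := by
  rcases u with a | b <;> rcases v with a' | b'
  · simp at huv
  · exact h.edist_inl_inr_le_three a b'
  · exact edist_comm (G := H) ▸ h.edist_inl_inr_le_three a' b
  · simp at huv

open Classical in
theorem HasDominatingVertexOnEachSide.edist_eq (hH : H ≤ completeBipartiteGraph α β)
    (h : HasDominatingVertexOnEachSide H) (x y : α ⊕ β) :
    H.edist x y =
      if x = y then 0 else if x.isLeft = y.isLeft then 2 else if H.Adj x y then 1 else 3 := by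
  split_ifs with hxy hside hadj
  · simp [hxy]
  · exact edist_eq_two_iff.mpr ⟨hxy, fun hadj => isLeft_ne_of_adj hH hadj hside,
      h.commonNeighbors_nonempty hside⟩
  · exact edist_eq_one_iff_adj.mpr hadj
  · have hlt : 2 < H.edist x y :=
      two_lt_edist_iff.mpr ⟨hxy, hadj, commonNeighbors_eq_empty_of_isLeft_ne hH hside⟩
    exact le_antisymm (h.edist_le_three hside) (Order.add_one_le_of_lt hlt)

theorem not_monitors_of_notMem {G : SimpleGraph (α ⊕ β)} (hG : G ≤ completeBipartiteGraph α β)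
    {f : Sym2 (α ⊕ β)} (hf : HasDominatingVertexOnEachSide (G.deleteEdges {f}))
    {x : α ⊕ β} (hx : x ∉ f) : ¬ monitors G x f := by
  rintro ⟨y, hy⟩
  have hadj : G.Adj x y ↔ (G.deleteEdges {f}).Adj x y := by
    rw [deleteEdges_adj, Set.mem_singleton_iff]
    exact ⟨fun h => ⟨h, fun hxy => hx (hxy ▸ Sym2.mem_mk_left x y)⟩, And.left⟩
  rw [(hf.mono (G.deleteEdges_le _)).edist_eq hG,
    hf.edist_eq ((G.deleteEdges_le _).trans hG), hadj] at hy
  exact hy rfl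

theorem IsDEMSet.isVertexCover {G : SimpleGraph (α ⊕ β)} (hG : G ≤ completeBipartiteGraph α β)
    (hdom : ∀ f ∈ G.edgeSet, HasDominatingVertexOnEachSide (G.deleteEdges {f}))
    {M : Set (α ⊕ β)} (hM : IsDEMSet G M) : G.IsVertexCover M := by
  intro v w hvw
  obtain ⟨x, hxM, hx⟩ := hM s(v, w) hvw
  by_contra! hvwM
  refine not_monitors_of_notMem hG (hdom _ hvw) ?_ hx
  intro hxvw
  rcases Sym2.mem_iff.mp hxvw with rfl | rfl
  exacts [hvwM.1 hxM, hvwM.2 hxM]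

theorem SimpleGraph.IsVertexCover.card_le_ncard {G : SimpleGraph (α ⊕ β)} {M : Set (α ⊕ β)}
    (hM : G.IsVertexCover M) (hfin : M.Finite) {f : α → β} (hf : Function.Injective f)
    (hadj : ∀ a, G.Adj (inl a) (inr (f a))) : Nat.card α ≤ M.ncard := by
  classical
  rw [← Set.ncard_univ]
  refine Set.ncard_le_ncard_of_injOn (fun a => if inl a ∈ M then inl a else inr (f a)) ?_ ?_ hfin
  · intro a _
    split_ifs with ha
    exacts [ha, (hM (hadj a)).resolve_left ha]
  · intro a _ a' _
    simp only
    split_ifs <;> simp [hf.eq_iff]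

theorem isVertexCover_range_inl (hH : H ≤ completeBipartiteGraph α β) :
    H.IsVertexCover (Set.range inl) := by
  intro u v huv
  have := hH huv
  rcases u with a | b <;> rcases v with a' | b' <;> simp_all

theorem hasDominatingVertexOnEachSide_deleteEdges {S : Set (Sym2 (α ⊕ β))} {a₀ : α} {b₀ : β}
    (ha₀ : ∀ e ∈ S, inl a₀ ∉ e) (hb₀ : ∀ e ∈ S, inr b₀ ∉ e) :
    HasDominatingVertexOnEachSide ((completeBipartiteGraph α β).deleteEdges S) :=
  ⟨⟨a₀, fun b => by simpa [deleteEdges_adj] using fun h => ha₀ _ h (Sym2.mem_mk_left _ _)⟩,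
    ⟨b₀, fun a => by simpa [deleteEdges_adj] using fun h => hb₀ _ h (Sym2.mem_mk_right _ _)⟩⟩

theorem hasDominatingVertexOnEachSide_deleteEdges_of_subset_pair (hα : 3 ≤ ENat.card α)
    (hβ : 3 ≤ ENat.card β) {S : Set (Sym2 (α ⊕ β))} {a₀ a₁ : α} {b₀ b₁ : β}
    (hS : S ⊆ {s(inl a₀, inr b₀), s(inl a₁, inr b₁)}) :
    HasDominatingVertexOnEachSide ((completeBipartiteGraph α β).deleteEdges S) := by
  obtain ⟨a, ha₀, ha₁⟩ := ENat.exists_ne_ne_of_three_le hα a₀ a₁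
  obtain ⟨b, hb₀, hb₁⟩ := ENat.exists_ne_ne_of_three_le hβ b₀ b₁
  refine hasDominatingVertexOnEachSide_deleteEdges (a₀ := a) (b₀ := b) ?_ ?_ <;>
    intro e he <;> rcases hS he with rfl | rfl <;> simp [*]

end Bipartite

section CompleteBipartite

variable {α : Type*}

theorem hasDominatingVertexOnEachSide_deleteEdges_deleteEdges (hα : 3 ≤ ENat.card α)
    {S : Set (Sym2 (α ⊕ α))} {a₀ b₀ : α} (hS : S ⊆ {s(inl a₀, inr b₀)}) :
    ∀ f ∈ ((completeBipartiteGraph α α).deleteEdges S).edgeSet,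
      HasDominatingVertexOnEachSide
        (((completeBipartiteGraph α α).deleteEdges S).deleteEdges {f}) := by
  intro f hf
  obtain ⟨a₁, b₁, rfl⟩ := exists_eq_inl_inr_of_mem_edgeSet (edgeSet_mono (deleteEdges_le S) hf)
  rw [deleteEdges_deleteEdges]
  exact hasDominatingVertexOnEachSide_deleteEdges_of_subset_pair hα hα
    (a₀ := a₀) (b₀ := b₀) (a₁ := a₁) (b₁ := b₁) (Set.union_subset (hS.trans (by simp)) (by simp))

theorem exists_equiv_adj_deleteEdges (hα : 3 ≤ ENat.card α) {S : Set (Sym2 (α ⊕ α))}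
    {a₀ b₀ : α} (hS : S ⊆ {s(inl a₀, inr b₀)}) :
    ∃ σ : α ≃ α, ∀ a, ((completeBipartiteGraph α α).deleteEdges S).Adj (inl a) (inr (σ a)) := by
  classical
  obtain ⟨c, hca₀, hcb₀⟩ := ENat.exists_ne_ne_of_three_le hα a₀ b₀
  refine ⟨Equiv.swap a₀ c, fun a => ?_⟩
  rw [deleteEdges_adj]
  refine ⟨by simp, fun ha => ?_⟩
  obtain ⟨rfl, hσ⟩ : a = a₀ ∧ Equiv.swap a₀ c a = b₀ := by simpa using hS ha
  exact hcb₀ (by simpa using hσ)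

theorem dem_deleteEdges_of_subset_singleton [Finite α] (hα : 3 ≤ Nat.card α)
    {S : Set (Sym2 (α ⊕ α))} {a₀ b₀ : α} (hS : S ⊆ {s(inl a₀, inr b₀)}) :
    dem ((completeBipartiteGraph α α).deleteEdges S) = Nat.card α := by
  have hα' : 3 ≤ ENat.card α := by simpa [ENat.card_eq_coe_natCard] using hα
  obtain ⟨σ, hσ⟩ := exists_equiv_adj_deleteEdges hα' hS
  refine dem_eq_of_isLeast ⟨⟨Set.range inl, Set.ncard_range_of_injective inl_injective,
    (isVertexCover_range_inl (deleteEdges_le S)).isDEMSet⟩, ?_⟩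
  rintro _ ⟨M, rfl, hM⟩
  exact (hM.isVertexCover (deleteEdges_le S)
    (hasDominatingVertexOnEachSide_deleteEdges_deleteEdges hα' hS)).card_le_ncard
      M.toFinite σ.injective hσ

end CompleteBipartite

theorem stmt18 (n : ℕ) (hn : 3 ≤ n) (e : Sym2 (Fin n ⊕ Fin n))
    (he : e ∈ (completeBipartiteGraph (Fin n) (Fin n)).edgeSet) :
    dem ((completeBipartiteGraph (Fin n) (Fin n)).deleteEdges {e}) = n ∧
    dem (completeBipartiteGraph (Fin n) (Fin n)) = n := by
  obtain ⟨a₀, b₀, rfl⟩ := exists_eq_inl_inr_of_mem_edgeSet he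
  have hcard : 3 ≤ Nat.card (Fin n) := by simpa using hn
  constructor
  · simpa using dem_deleteEdges_of_subset_singleton hcard subset_rfl
  · simpa using dem_deleteEdges_of_subset_singleton hcard (Set.empty_subset {s(inl a₀, inr b₀)})
end
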